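/- Recursive types: for all non-expansive F, G : Type → Type: (SemUnfold) Σ ⊨ a : μF implies Σ ⊨ unfold a : F(μF); (SemFold) Σ ⊨ a : F(μF) implies Σ ⊨ fold a : μF; (SemSubRec) if F(α) ⊆ G(β) for all semantic types α ⊆ β, then μF ⊆ μG. -/

import Mathlib

set_option maxHeartbeats 1000000

namespace ImpObj

/-! # Syntax of the imperative object calculus (type annotations erased) -/

abbrev Var := ℕ
abbrev MethName := ℕ
abbrev Loc := ℕ

inductive Variance : Type where
  | inv | cov | con
  deriving DecidableEq

inductive Tm : Type where
  | var    : Var → Tm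
  | obj    : Finset MethName → (MethName → Var) → (MethName → Tm) → Tm
  | vobj   : Finset MethName → (MethName → Loc) → Tm
  | inv    : Tm → MethName → Tm
  | upd    : Tm → MethName → Var → Tm → Tm
  | clone  : Tm → Tm
  | lam    : Var → Tm → Tm
  | app    : Tm → Tm → Tm
  | fold   : Tm → Tm
  | unfd   : Tm → Tm
  | tlam   : Tm → Tm
  | tapp   : Tm → Tm
  | pack   : Tm → Tm
  | opn    : Tm → Var → Tm → Tm

/-- Free (term) variables. -/
def fv : Tm → Set Var
  | .var x => {x}
  | .obj D xs bs => ⋃ d ∈ D, (fv (bs d) \ {xs d})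
  | .vobj _ _ => ∅
  | .inv a _ => fv a
  | .upd a _ x b => fv a ∪ (fv b \ {x})
  | .clone a => fv a
  | .lam x b => fv b \ {x}
  | .app a b => fv a ∪ fv b
  | .fold a => fv a
  | .unfd a => fv a
  | .tlam a => fv a
  | .tapp a => fv a
  | .pack a => fv a
  | .opn a x b => fv a ∪ (fv b \ {x})

/-- Heap locations occurring in a term. -/
def locs : Tm → Set Loc
  | .var _ => ∅
  | .obj D _ bs => ⋃ d ∈ D, locs (bs d)
  | .vobj E ls => ls '' ↑E
  | .inv a _ => locs a
  | .upd a _ _ b => locs a ∪ locs b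
  | .clone a => locs a
  | .lam _ b => locs b
  | .app a b => locs a ∪ locs b
  | .fold a => locs a
  | .unfd a => locs a
  | .tlam a => locs a
  | .tapp a => locs a
  | .pack a => locs a
  | .opn a _ b => locs a ∪ locs b

/-- Values. -/
inductive IsVal : Tm → Prop where
  | vobj (E : Finset MethName) (ls : MethName → Loc) : IsVal (.vobj E ls)
  | lam (x : Var) (b : Tm) : IsVal (.lam x b)
  | fold {v : Tm} : IsVal v → IsVal (.fold v)
  | tlam (b : Tm) : IsVal (.tlam b)
  | pack {v : Tm} : IsVal v → IsVal (.pack v)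

/-- Closed values. -/
def CVal : Type := {v : Tm // IsVal v ∧ fv v = ∅}

/-- A run-time object is a closed value. -/
def CVal.mkVObj (E : Finset MethName) (ls : MethName → Loc) : CVal :=
  ⟨.vobj E ls, IsVal.vobj E ls, by simp [fv]⟩

def removeKey (σ : Var → Option Tm) (x : Var) : Var → Option Tm :=
  fun y => if y = x then none else σ y

/-- Simultaneous substitution of (closed) terms for free variables. -/
def msubst : Tm → (Var → Option Tm) → Tm
  | .var x, σ => (σ x).getD (.var x)
  | .obj D xs bs, σ => .obj D xs fun d => msubst (bs d) (removeKey σ (xs d))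
  | .vobj E ls, _ => .vobj E ls
  | .inv a m, σ => .inv (msubst a σ) m
  | .upd a m x b, σ => .upd (msubst a σ) m x (msubst b (removeKey σ x))
  | .clone a, σ => .clone (msubst a σ)
  | .lam x b, σ => .lam x (msubst b (removeKey σ x))
  | .app a b, σ => .app (msubst a σ) (msubst b σ)
  | .fold a, σ => .fold (msubst a σ)
  | .unfd a, σ => .unfd (msubst a σ)
  | .tlam a, σ => .tlam (msubst a σ)
  | .tapp a, σ => .tapp (msubst a σ)
  | .pack a, σ => .pack (msubst a σ)
  | .opn a x b, σ => .opn (msubst a σ) x (msubst b (removeKey σ x))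

def subst1 (b : Tm) (x : Var) (v : Tm) : Tm :=
  msubst b fun y => if y = x then some v else none

/-! # Heaps and small-step operational semantics -/

/-- Heaps: finite maps from locations to closed values. -/
structure Heap where
  fn : Loc → Option CVal
  fin : Set.Finite {l | fn l ≠ none}

def Heap.get? (h : Heap) (l : Loc) : Option Tm := (h.fn l).map Subtype.val

abbrev Config := Heap × Tm

/-- Evaluation contexts (left-to-right, call-by-value). -/
inductive ECtx : Type where
  | hole : ECtx
  | inv : ECtx → MethName → ECtx
  | upd : ECtx → MethName → Var → Tm → ECtx
  | clone : ECtx → ECtx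
  | appL : ECtx → Tm → ECtx
  | appR : (v : Tm) → IsVal v → ECtx → ECtx
  | fold : ECtx → ECtx
  | unfd : ECtx → ECtx
  | tapp : ECtx → ECtx
  | pack : ECtx → ECtx
  | opn : ECtx → Var → Tm → ECtx

def ECtx.plug : ECtx → Tm → Tm
  | .hole, a => a
  | .inv E m, a => .inv (E.plug a) m
  | .upd E m x b, a => .upd (E.plug a) m x b
  | .clone E, a => .clone (E.plug a)
  | .appL E b, a => .app (E.plug a) b
  | .appR v _ E, a => .app v (E.plug a)
  | .fold E, a => .fold (E.plug a)
  | .unfd E, a => .unfd (E.plug a)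
  | .tapp E, a => .tapp (E.plug a)
  | .pack E, a => .pack (E.plug a)
  | .opn E x b, a => .opn (E.plug a) x b

/-- Head (redex) reductions. -/
inductive Head : Config → Config → Prop where
  | obj {h h' : Heap} {D : Finset MethName} {xs : MethName → Var} {bs : MethName → Tm}
      {ls : MethName → Loc} :
      (∀ d ∈ D, h.fn (ls d) = none) →
      Set.InjOn ls ↑D →
      (∀ d ∈ D, h'.get? (ls d) = some (.lam (xs d) (bs d))) →
      (∀ l : Loc, (∀ d ∈ D, ls d ≠ l) → h'.fn l = h.fn l) →
      Head (h, .obj D xs bs) (h', .vobj D ls)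
  | inv {h : Heap} {E : Finset MethName} {ls : MethName → Loc} {e : MethName} {f : Tm} :
      e ∈ E → h.get? (ls e) = some f →
      Head (h, .inv (.vobj E ls) e) (h, .app f (.vobj E ls))
  | upd {h h' : Heap} {E : Finset MethName} {ls : MethName → Loc} {e : MethName}
      {x : Var} {b : Tm} :
      e ∈ E →
      h'.get? (ls e) = some (.lam x b) →
      (∀ l : Loc, l ≠ ls e → h'.fn l = h.fn l) →
      Head (h, .upd (.vobj E ls) e x b) (h', .vobj E ls)
  | clone {h h' : Heap} {E : Finset MethName} {ls ls' : MethName → Loc} :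
      (∀ e ∈ E, h.fn (ls' e) = none) →
      Set.InjOn ls' ↑E →
      (∀ e ∈ E, h'.fn (ls' e) = h.fn (ls e)) →
      (∀ l : Loc, (∀ e ∈ E, ls' e ≠ l) → h'.fn l = h.fn l) →
      Head (h, .clone (.vobj E ls)) (h', .vobj E ls')
  | beta {h : Heap} {x : Var} {b v : Tm} :
      IsVal v → Head (h, .app (.lam x b) v) (h, subst1 b x v)
  | unfold {h : Heap} {v : Tm} : IsVal v → Head (h, .unfd (.fold v)) (h, v)
  | tbeta {h : Heap} {b : Tm} : Head (h, .tapp (.tlam b)) (h, b)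
  | openv {h : Heap} {v : Tm} {x : Var} {b : Tm} :
      IsVal v → Head (h, .opn (.pack v) x b) (h, subst1 b x v)

/-- One-step reduction: closure of head reduction under evaluation contexts. -/
inductive Step : Config → Config → Prop where
  | ctx {h h' : Heap} {a a' : Tm} (E : ECtx) :
      Head (h, a) (h', a') → Step (h, E.plug a) (h', E.plug a')

/-- `k`-step reduction. -/
inductive StepN : ℕ → Config → Config → Prop where
  | refl (c : Config) : StepN 0 c c
  | tail {n : ℕ} {c c' c'' : Config} : StepN n c c' → Step c' c'' → StepN (n + 1) c c''

def Irred (c : Config) : Prop := ¬ ∃ c', Step c c'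

/-- Safe for `k` steps. -/
def SafeN (c : Config) (k : ℕ) : Prop :=
  ∀ j < k, ∀ c' : Config, StepN j c c' → Irred c' → IsVal c'.2

/-- Safe (for any number of steps). -/
def Safe (c : Config) : Prop := ∀ k, SafeN c k

/-! # The stratified step-indexed universe of pre-types -/

/-- `Approx k` is (the type of elements of) `PreType_k`: sets of triples `(j, Ψ, v)`
with `j < k` and `Ψ ∈ HeapPreTyping_j` a finite map from locations to `PreType_j`. -/
def Approx : ℕ → Type :=
  WellFounded.fix (Nat.lt_wfRel.wf) fun k ih =>
    Set ((j : Fin k) × ({Ψ : Loc → Option (ih j.1 j.isLt) // Set.Finite {l | Ψ l ≠ none}} × CVal))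

/-- Heap pre-typings of level `j`: finite maps from locations to `PreType_j`. -/
def HPT (j : ℕ) : Type :=
  {Ψ : Loc → Option (Approx j) // Set.Finite {l | Ψ l ≠ none}}

theorem Approx_eq (k : ℕ) :
    Approx k = Set ((j : Fin k) × (HPT j.1 × CVal)) :=
  WellFounded.fix_eq _ _ _

def Approx.out {k : ℕ} (S : Approx k) : Set ((j : Fin k) × (HPT j.1 × CVal)) :=
  cast (Approx_eq k) S

def Approx.mk' {k : ℕ} (S : Set ((j : Fin k) × (HPT j.1 × CVal))) : Approx k :=
  cast (Approx_eq k).symm S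

/-- Triples `(j, Ψ, v)` with `Ψ ∈ HeapPreTyping_j` and `v` a closed value. -/
def Triple : Type := (j : ℕ) × (HPT j × CVal)

/-- Pre-types: arbitrary sets of triples. -/
abbrev PreType : Type := Set Triple

/-- View an element of `PreType_k` as a pre-type. -/
def Approx.seg {k : ℕ} (S : Approx k) : PreType :=
  {t | ∃ hlt : t.1 < k, (⟨⟨t.1, hlt⟩, t.2⟩ : (j : Fin k) × (HPT j.1 × CVal)) ∈ S.out}

/-- The `k`-th approximation `⌊τ⌋_k` of a pre-type. -/
def papprox (τ : PreType) (k : ℕ) : PreType := {t ∈ τ | t.1 < k}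

/-- The `k`-th approximation of a pre-type, as an element of `PreType_k`. -/
def toApprox (τ : PreType) (k : ℕ) : Approx k :=
  Approx.mk' {p | (⟨p.1.1, p.2⟩ : Triple) ∈ τ}

def HPT.dom {k : ℕ} (Ψ : HPT k) : Set Loc := {l | Ψ.1 l ≠ none}

/-- `Ψ(l)`, viewed as a pre-type. -/
def HPT.look {k : ℕ} (Ψ : HPT k) (l : Loc) : Option PreType := (Ψ.1 l).map Approx.seg

/-- `⌊Ψ⌋_j(l) = ⌊Ψ(l)⌋_j`, viewed as a pre-type. -/
def HPT.lookA {k : ℕ} (Ψ : HPT k) (j : ℕ) (l : Loc) : Option PreType :=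
  (Ψ.look l).map (papprox · j)

/-- Pointwise approximation `⌊Ψ⌋_j` of a heap pre-typing. -/
def HPT.trunc {k : ℕ} (Ψ : HPT k) (j : ℕ) : HPT j :=
  ⟨fun l => (Ψ.1 l).map fun S => toApprox (Approx.seg S) j, by
    apply Ψ.2.subset
    intro l hl
    simp only [Set.mem_setOf_eq] at hl ⊢
    intro h0
    rw [h0] at hl
    exact hl rfl⟩

/-- A state `(k, Ψ)`. -/
structure St where
  k : ℕ
  Ψ : HPT k

/-- State extension `(k, Ψ) ⊑ (j, Ψ')`. -/
def StExt (s t : St) : Prop :=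
  t.k ≤ s.k ∧ s.Ψ.dom ⊆ t.Ψ.dom ∧ ∀ l ∈ s.Ψ.dom, t.Ψ.lookA t.k l = s.Ψ.lookA t.k l

/-- Semantic types: pre-types closed under state extension. -/
def IsSemType (τ : PreType) : Prop :=
  ∀ t ∈ τ, ∀ (j : ℕ) (Ψ' : HPT j),
    StExt ⟨t.1, t.2.1⟩ ⟨j, Ψ'⟩ → (⟨j, Ψ', t.2.2⟩ : Triple) ∈ τ

/-- Heap typings: heap pre-typings all of whose entries are semantic types. -/
def HPT.IsTy {k : ℕ} (Ψ : HPT k) : Prop :=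
  ∀ l S, Ψ.1 l = some S → IsSemType (Approx.seg S)

/-- Well-typed heap `h :_k Ψ`. -/
def HeapOk (h : Heap) {k : ℕ} (Ψ : HPT k) : Prop :=
  (∀ l ∈ Ψ.dom, h.fn l ≠ none) ∧
  ∀ j < k, ∀ l S, Ψ.1 l = some S → ∀ v : CVal, h.fn l = some v →
    (⟨j, Ψ.trunc j, v⟩ : Triple) ∈ Approx.seg S

/-- A closed term has type `τ` with respect to the state `(k, Ψ)`:  `a :_{k,Ψ} τ`. -/
def HasTypeAt (a : Tm) {k : ℕ} (Ψ : HPT k) (τ : PreType) : Prop :=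
  ∀ j < k, ∀ (h h' : Heap) (b : Tm),
    HeapOk h Ψ → StepN j (h, a) (h', b) → Irred (h', b) →
    ∃ Ψ' : HPT (k - j), Ψ'.IsTy ∧ StExt ⟨k, Ψ⟩ ⟨k - j, Ψ'⟩ ∧ HeapOk h' Ψ' ∧
      ∃ hb : IsVal b ∧ fv b = ∅, (⟨k - j, Ψ', ⟨b, hb⟩⟩ : Triple) ∈ τ

/-! # Semantic typing judgement -/

/-- Semantic type environments. -/
def SemEnv : Type := Var → Option PreType

/-- All types in the environment are semantic types. -/
def EnvSem (Γ : SemEnv) : Prop := ∀ x τ, Γ x = some τ → IsSemType τ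

def envExt (Γ : SemEnv) (x : Var) (τ : PreType) : SemEnv :=
  fun y => if y = x then some τ else Γ y

/-- Value environments. -/
def VEnv : Type := Var → Option CVal

/-- `σ :_{k,Ψ} Σ`. -/
def EnvOk (σ : VEnv) {k : ℕ} (Ψ : HPT k) (Γ : SemEnv) : Prop :=
  ∀ x τ, Γ x = some τ → ∃ v : CVal, σ x = some v ∧ HasTypeAt v.1 Ψ τ

def toSubst (σ : VEnv) : Var → Option Tm := fun x => (σ x).map Subtype.val

/-- The semantic typing judgement `Σ ⊨ a : τ`. -/
def SemJudg (Γ : SemEnv) (a : Tm) (τ : PreType) : Prop :=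
  fv a ⊆ {x | Γ x ≠ none} ∧
  ∀ (k : ℕ) (Ψ : HPT k), Ψ.IsTy → ∀ σ : VEnv, EnvOk σ Ψ Γ →
    HasTypeAt (msubst a (toSubst σ)) Ψ τ

/-! # Semantic type constructors -/

def botTy : PreType := ∅
def topTy : PreType := Set.univ

/-- Procedure types `α → β`. -/
def arrTy (α β : PreType) : PreType :=
  {t | ∃ (x : Var) (b : Tm), t.2.2.1 = Tm.lam x b ∧
    ∀ j < t.1, ∀ Ψ' : HPT j, Ψ'.IsTy → ∀ v : CVal,
      StExt ⟨t.1, t.2.1⟩ ⟨j, Ψ'⟩ → (⟨j, Ψ', v⟩ : Triple) ∈ α →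
      HasTypeAt (subst1 b x v.1) Ψ' β}

/-- "Triples" whose value component is a heap location. -/
def RefEl : Type := (k : ℕ) × (HPT k × Loc)

/-- Invariant reference types. -/
def refInv (τ : PreType) : Set RefEl :=
  {p | ∃ S, p.2.1.1 p.2.2 = some S ∧ papprox (Approx.seg S) p.1 = papprox τ p.1}

/-- Readable (covariant) reference types. -/
def refCov (τ : PreType) : Set RefEl :=
  {p | ∃ S, p.2.1.1 p.2.2 = some S ∧ papprox (Approx.seg S) p.1 ⊆ papprox τ p.1}

/-- Writable (contravariant) reference types. -/
def refCon (τ : PreType) : Set RefEl :=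
  {p | ∃ S, p.2.1.1 p.2.2 = some S ∧ papprox τ p.1 ⊆ papprox (Approx.seg S) p.1}

def refTy : Variance → PreType → Set RefEl
  | .inv => refInv
  | .cov => refCov
  | .con => refCon

/-- Generalized reference types `ref(τʷ, τʳ)`. -/
def refGen (τw τr : PreType) : Set RefEl := refTy .con τw ∩ refTy .cov τr

/-- Closure under state extension for sets of location-triples. -/
def RefClosed (R : Set RefEl) : Prop :=
  ∀ p ∈ R, ∀ (j : ℕ) (Ψ' : HPT j),
    StExt ⟨p.1, p.2.1⟩ ⟨j, Ψ'⟩ → (⟨j, Ψ', p.2.2⟩ : RefEl) ∈ R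

/-- Object types `[m_d :ν_d τ_d]_{d∈D}` (membership of `(k, Ψ, w)`). -/
def objSlice (D : Finset MethName) (ν : MethName → Variance) (τs : MethName → PreType)
    (k : ℕ) (Ψ : HPT k) (w : CVal) : Prop :=
  ∃ (E : Finset MethName) (ls : MethName → Loc),
    w.1 = Tm.vobj E ls ∧ D ⊆ E ∧
    ∃ α' : PreType, IsSemType α' ∧
      papprox α' k ⊆ {t : Triple | ∃ _hlt : t.1 < k, objSlice D ν τs t.1 t.2.1 t.2.2} ∧
      (∀ d ∈ D, (⟨k, Ψ, ls d⟩ : RefEl) ∈ refTy (ν d) (arrTy α' (τs d))) ∧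
      (∀ j, ∀ _hj : j < k, ∀ Ψ' : HPT j, ∀ ls' : MethName → Loc,
        StExt ⟨k, Ψ⟩ ⟨j, Ψ'⟩ →
        (∀ e ∈ E, Ψ'.lookA j (ls' e) = Ψ.lookA j (ls e)) →
        (⟨j, Ψ'.trunc j, CVal.mkVObj E ls'⟩ : Triple) ∈ α')
  termination_by k
  decreasing_by exact _hlt

def objTy (D : Finset MethName) (ν : MethName → Variance) (τs : MethName → PreType) :
    PreType :=
  {t | objSlice D ν τs t.1 t.2.1 t.2.2}

/-- Generalized object types `[m_d : τʷ_d / τʳ_d]_{d∈D}` (membership of `(k, Ψ, w)`). -/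
def objSliceG (D : Finset MethName) (τw τr : MethName → PreType)
    (k : ℕ) (Ψ : HPT k) (w : CVal) : Prop :=
  ∃ (E : Finset MethName) (ls : MethName → Loc),
    w.1 = Tm.vobj E ls ∧ D ⊆ E ∧
    ∃ α' : PreType, IsSemType α' ∧
      papprox α' k ⊆ {t : Triple | ∃ _hlt : t.1 < k, objSliceG D τw τr t.1 t.2.1 t.2.2} ∧
      (∀ d ∈ D, (⟨k, Ψ, ls d⟩ : RefEl) ∈ refGen (arrTy α' (τw d)) (arrTy α' (τr d))) ∧
      (∀ j, ∀ _hj : j < k, ∀ Ψ' : HPT j, ∀ ls' : MethName → Loc,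
        StExt ⟨k, Ψ⟩ ⟨j, Ψ'⟩ →
        (∀ e ∈ E, Ψ'.lookA j (ls' e) = Ψ.lookA j (ls e)) →
        (⟨j, Ψ'.trunc j, CVal.mkVObj E ls'⟩ : Triple) ∈ α')
  termination_by k
  decreasing_by exact _hlt

def objTyG (D : Finset MethName) (τw τr : MethName → PreType) : PreType :=
  {t | objSliceG D τw τr t.1 t.2.1 t.2.2}

/-- Non-expansive type constructors. -/
def NonExpansive (F : PreType → PreType) : Prop :=
  ∀ τ : PreType, IsSemType τ → ∀ k : ℕ, papprox (F τ) k = papprox (F (papprox τ k)) k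

/-- `F` maps semantic types to semantic types. -/
def SemPreserving (F : PreType → PreType) : Prop :=
  ∀ τ : PreType, IsSemType τ → IsSemType (F τ)

/-- Bounded universal types `∀_α F`. -/
def allTy (α : PreType) (F : PreType → PreType) : PreType :=
  {t | ∃ a : Tm, t.2.2.1 = Tm.tlam a ∧
    ∀ (j : ℕ) (Ψ' : HPT j), Ψ'.IsTy → ∀ τ : PreType, IsSemType τ →
      StExt ⟨t.1, t.2.1⟩ ⟨j, Ψ'⟩ → papprox τ j ⊆ papprox α j →
      ∀ i < j, HasTypeAt a (Ψ'.trunc i) (F τ)}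

/-- Bounded existential types `∃_α F`. -/
def exTy (α : PreType) (F : PreType → PreType) : PreType :=
  {t | ∃ v : CVal, t.2.2.1 = Tm.pack v.1 ∧
    ∃ τ : PreType, IsSemType τ ∧ papprox τ t.1 ⊆ papprox α t.1 ∧
      ∀ j < t.1, (⟨j, t.2.1.trunc j, v⟩ : Triple) ∈ F τ}

/-- Iso-recursive types `μF` (membership of `(k, Ψ, w)`). -/
def muMem (F : PreType → PreType) (k : ℕ) (Ψ : HPT k) (w : CVal) : Prop :=
  ∃ v : CVal, w.1 = Tm.fold v.1 ∧
    ∀ j, j < k →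
      (⟨j, Ψ.trunc j, v⟩ : Triple) ∈
        F {t : Triple | ∃ _hlt : t.1 < k, muMem F t.1 t.2.1 t.2.2}
  termination_by k
  decreasing_by exact _hlt

def muTy (F : PreType → PreType) : PreType := {t | muMem F t.1 t.2.1 t.2.2}

/-- The defining property of the object type `[m_d :ν_d τ_d]_{d∈D}` (fixed-point form). -/
def ObjMemProp (D : Finset MethName) (ν : MethName → Variance) (τs : MethName → PreType)
    (α : PreType) (k : ℕ) (Ψ : HPT k) (w : CVal) : Prop :=
  ∃ (E : Finset MethName) (ls : MethName → Loc),
    w.1 = Tm.vobj E ls ∧ D ⊆ E ∧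
    ∃ α' : PreType, IsSemType α' ∧
      papprox α' k ⊆ papprox α k ∧
      (∀ d ∈ D, (⟨k, Ψ, ls d⟩ : RefEl) ∈ refTy (ν d) (arrTy α' (τs d))) ∧
      (∀ j < k, ∀ Ψ' : HPT j, ∀ ls' : MethName → Loc,
        StExt ⟨k, Ψ⟩ ⟨j, Ψ'⟩ →
        (∀ e ∈ E, Ψ'.lookA j (ls' e) = Ψ.lookA j (ls e)) →
        (⟨j, Ψ'.trunc j, CVal.mkVObj E ls'⟩ : Triple) ∈ α')

/-- `α` satisfies the recursive specification of the object type. -/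
def ObjFix (D : Finset MethName) (ν : MethName → Variance) (τs : MethName → PreType)
    (α : PreType) : Prop :=
  ∀ t : Triple, t ∈ α ↔ ObjMemProp D ν τs α t.1 t.2.1 t.2.2

/-- `α` satisfies the defining equivalence of the recursive type `μF` and
consists only of `fold`-values. -/
def MuFix (F : PreType → PreType) (α : PreType) : Prop :=
  (∀ t ∈ α, ∃ v : Tm, t.2.2.1 = Tm.fold v) ∧
  ∀ (k : ℕ) (Ψ : HPT k) (v : CVal) (hv : IsVal (Tm.fold v.1) ∧ fv (Tm.fold v.1) = ∅),
    (⟨k, Ψ, ⟨Tm.fold v.1, hv⟩⟩ : Triple) ∈ α ↔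
      ∀ j < k, (⟨j, Ψ.trunc j, v⟩ : Triple) ∈ F α

/-! # The syntactic type system -/

inductive SType : Type where
  | tvar : ℕ → SType
  | top : SType
  | bot : SType
  | arr : SType → SType → SType
  | obj : Finset MethName → (MethName → Variance) → (MethName → SType) → SType
  | mu : ℕ → SType → SType
  | all : ℕ → SType → SType → SType
  | ex : ℕ → SType → SType → SType

/-- Free type variables of a syntactic type. -/
def ftv : SType → Set ℕ
  | .tvar X => {X}
  | .top => ∅
  | .bot => ∅
  | .arr A B => ftv A ∪ ftv B
  | .obj D _ As => ⋃ d ∈ D, ftv (As d)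
  | .mu X A => ftv A \ {X}
  | .all X A B => ftv A ∪ (ftv B \ {X})
  | .ex X A B => ftv A ∪ (ftv B \ {X})

/-- Substitution `A[X ↦ C]` of a type for a type variable. -/
def tsubst : SType → ℕ → SType → SType
  | .tvar Y, X, C => if Y = X then C else .tvar Y
  | .top, _, _ => .top
  | .bot, _, _ => .bot
  | .arr A B, X, C => .arr (tsubst A X C) (tsubst B X C)
  | .obj D ν As, X, C => .obj D ν fun d => tsubst (As d) X C
  | .mu Y A, X, C => if Y = X then .mu Y A else .mu Y (tsubst A X C)
  | .all Y A B, X, C => .all Y (tsubst A X C) (if Y = X then B else tsubst B X C)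
  | .ex Y A B, X, C => .ex Y (tsubst A X C) (if Y = X then B else tsubst B X C)

/-- Context bindings: `X <: A` and `x : A`. -/
inductive Bind : Type where
  | tv : ℕ → SType → Bind
  | v : Var → SType → Bind

abbrev SCtx := List Bind

def tvDom (Γ : SCtx) : Set ℕ := {X | ∃ A, Bind.tv X A ∈ Γ}
def vDom (Γ : SCtx) : Set Var := {x | ∃ A, Bind.v x A ∈ Γ}

/-- Well-formed typing contexts. -/
inductive WfCtx : SCtx → Prop where
  | nil : WfCtx []
  | consV {Γ : SCtx} {x : Var} {A : SType} :
      WfCtx Γ → x ∉ vDom Γ → ftv A ⊆ tvDom Γ → WfCtx (Bind.v x A :: Γ)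
  | consT {Γ : SCtx} {X : ℕ} {A : SType} :
      WfCtx Γ → X ∉ tvDom Γ → ftv A ⊆ tvDom Γ → WfCtx (Bind.tv X A :: Γ)

/-- Well-formed types. -/
def WfTy (Γ : SCtx) (A : SType) : Prop := WfCtx Γ ∧ ftv A ⊆ tvDom Γ

/-- The subtyping judgement `Γ ⊢ A <: B`. -/
inductive Sub : SCtx → SType → SType → Prop where
  | refl {Γ A} : WfTy Γ A → Sub Γ A A
  | trans {Γ A A' B} : Sub Γ A A' → Sub Γ A' B → Sub Γ A B
  | top {Γ A} : WfTy Γ A → Sub Γ A .top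
  | bot {Γ A} : WfTy Γ A → Sub Γ .bot A
  | tvar {Γ X A} : WfCtx Γ → Bind.tv X A ∈ Γ → Sub Γ (.tvar X) A
  | arr {Γ A A' B B'} : Sub Γ A' A → Sub Γ B B' → Sub Γ (.arr A B) (.arr A' B')
  | obj {Γ} {D E : Finset MethName} {ν : MethName → Variance} {As Bs : MethName → SType} :
      E ⊆ D →
      (∀ e ∈ E, (ν e = .cov ∨ ν e = .inv) → Sub Γ (As e) (Bs e)) →
      (∀ e ∈ E, (ν e = .con ∨ ν e = .inv) → Sub Γ (Bs e) (As e)) →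
      Sub Γ (.obj D ν As) (.obj E ν Bs)
  | objvar {Γ} {D : Finset MethName} {ν ν' : MethName → Variance} {As : MethName → SType} :
      (∀ d ∈ D, ν d = .inv ∨ ν d = ν' d) →
      Sub Γ (.obj D ν As) (.obj D ν' As)
  | mu {Γ X Y A B} : WfTy Γ (.mu X A) → WfTy Γ (.mu Y B) →
      Sub (Bind.tv X (.tvar Y) :: Bind.tv Y .top :: Γ) A B →
      Sub Γ (.mu X A) (.mu Y B)
  | all {Γ X A A' B B'} : Sub Γ A' A → Sub (Bind.tv X A' :: Γ) B B' →
      Sub Γ (.all X A B) (.all X A' B')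
  | ex {Γ X A A' B B'} : Sub Γ A A' → Sub (Bind.tv X A :: Γ) B B' →
      Sub Γ (.ex X A B) (.ex X A' B')

/-- Type-annotated (source) terms. -/
inductive STm : Type where
  | var : Var → STm
  | obj : Finset MethName → (MethName → Variance) → (MethName → SType) →
      (MethName → Var) → (MethName → STm) → STm
  | inv : STm → MethName → STm
  | upd : STm → MethName → Var → SType → STm → STm
  | clone : STm → STm
  | lam : Var → SType → STm → STm
  | app : STm → STm → STm
  | fold : SType → STm → STm
  | unfd : SType → STm → STm
  | tlam : ℕ → SType → STm → STm
  | tapp : STm → SType → STm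
  | pack : ℕ → SType → SType → STm → SType → STm
  | opn : STm → ℕ → SType → Var → SType → STm → SType → STm

/-- Erasure of all type annotations. -/
def erase : STm → Tm
  | .var x => .var x
  | .obj D _ _ xs bs => .obj D xs fun d => erase (bs d)
  | .inv a m => .inv (erase a) m
  | .upd a m x _ b => .upd (erase a) m x (erase b)
  | .clone a => .clone (erase a)
  | .lam x _ b => .lam x (erase b)
  | .app a b => .app (erase a) (erase b)
  | .fold _ a => .fold (erase a)
  | .unfd _ a => .unfd (erase a)
  | .tlam _ _ b => .tlam (erase b)
  | .tapp a _ => .tapp (erase a)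
  | .pack _ _ _ a _ => .pack (erase a)
  | .opn a _ _ x _ b _ => .opn (erase a) x (erase b)

/-- Substitution `a[X ↦ C]` of a type for a type variable inside a term. -/
def stsubst : STm → ℕ → SType → STm
  | .var x, _, _ => .var x
  | .obj D ν As xs bs, X, C =>
      .obj D ν (fun d => tsubst (As d) X C) xs fun d => stsubst (bs d) X C
  | .inv a m, X, C => .inv (stsubst a X C) m
  | .upd a m x A b, X, C => .upd (stsubst a X C) m x (tsubst A X C) (stsubst b X C)
  | .clone a, X, C => .clone (stsubst a X C)
  | .lam x A b, X, C => .lam x (tsubst A X C) (stsubst b X C)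
  | .app a b, X, C => .app (stsubst a X C) (stsubst b X C)
  | .fold A a, X, C => .fold (tsubst A X C) (stsubst a X C)
  | .unfd A a, X, C => .unfd (tsubst A X C) (stsubst a X C)
  | .tlam Y A b, X, C =>
      .tlam Y (tsubst A X C) (if Y = X then b else stsubst b X C)
  | .tapp a A, X, C => .tapp (stsubst a X C) (tsubst A X C)
  | .pack Y A B a B', X, C =>
      .pack Y (tsubst A X C) (tsubst B X C)
        (if Y = X then a else stsubst a X C) (if Y = X then B' else tsubst B' X C)
  | .opn a Y A x B b Cr, X, C =>
      .opn (stsubst a X C) Y (tsubst A X C) x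
        (if Y = X then B else tsubst B X C) (if Y = X then b else stsubst b X C)
        (tsubst Cr X C)

/-- The typing judgement `Γ ⊢ a : A`. -/
inductive Ty : SCtx → STm → SType → Prop where
  | sub {Γ a A B} : Ty Γ a A → Sub Γ A B → Ty Γ a B
  | var {Γ x A} : WfCtx Γ → Bind.v x A ∈ Γ → Ty Γ (.var x) A
  | lam {Γ x A b B} : Ty (Bind.v x A :: Γ) b B → Ty Γ (.lam x A b) (.arr A B)
  | app {Γ a b A B} : Ty Γ a (.arr B A) → Ty Γ b B → Ty Γ (.app a b) A
  | obj {Γ} {D : Finset MethName} {ν : MethName → Variance} {As : MethName → SType}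
      {xs : MethName → Var} {bs : MethName → STm} :
      (∀ d ∈ D, Ty (Bind.v (xs d) (.obj D ν As) :: Γ) (bs d) (As d)) →
      Ty Γ (.obj D ν As xs bs) (.obj D ν As)
  | clone {Γ a} {D : Finset MethName} {ν : MethName → Variance} {As : MethName → SType} :
      Ty Γ a (.obj D ν As) → Ty Γ (.clone a) (.obj D ν As)
  | inv {Γ a} {D : Finset MethName} {ν : MethName → Variance} {As : MethName → SType}
      {e : MethName} :
      Ty Γ a (.obj D ν As) → e ∈ D → (ν e = .cov ∨ ν e = .inv) →
      Ty Γ (.inv a e) (As e)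
  | upd {Γ a} {D : Finset MethName} {ν : MethName → Variance} {As : MethName → SType}
      {e : MethName} {x : Var} {b : STm} :
      Ty Γ a (.obj D ν As) → e ∈ D →
      Ty (Bind.v x (.obj D ν As) :: Γ) b (As e) → (ν e = .con ∨ ν e = .inv) →
      Ty Γ (.upd a e x (.obj D ν As) b) (.obj D ν As)
  | unfold {Γ a X A} :
      Ty Γ a (.mu X A) → Ty Γ (.unfd (.mu X A) a) (tsubst A X (.mu X A))
  | fold {Γ a X A} :
      Ty Γ a (tsubst A X (.mu X A)) → Ty Γ (.fold (.mu X A) a) (.mu X A)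
  | tabs {Γ X A b B} : Ty (Bind.tv X A :: Γ) b B → Ty Γ (.tlam X A b) (.all X A B)
  | tapp {Γ a X A B A'} :
      Ty Γ a (.all X A B) → Sub Γ A' A → Ty Γ (.tapp a A') (tsubst B X A')
  | pack {Γ X A C a B} : Sub Γ C A → Ty Γ (stsubst a X C) (tsubst B X C) →
      Ty Γ (.pack X A C a B) (.ex X A B)
  | opn {Γ a X A x B b C} : Ty Γ a (.ex X A B) → WfTy Γ C →
      Ty (Bind.v x B :: Bind.tv X A :: Γ) b C →
      Ty Γ (.opn a X A x B b C) C

/-! # Interpretation of syntactic types -/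

/-- The interpretation `⟦A⟧η` of a syntactic type. -/
def interp : SType → (ℕ → PreType) → PreType
  | .tvar X, η => η X
  | .top, _ => topTy
  | .bot, _ => botTy
  | .arr A B, η => arrTy (interp A η) (interp B η)
  | .obj D ν As, η => objTy D ν fun d => interp (As d) η
  | .mu X A, η => muTy fun α => interp A (Function.update η X α)
  | .all X A B, η => allTy (interp A η) fun α => interp B (Function.update η X α)
  | .ex X A B, η => exTy (interp A η) fun α => interp B (Function.update η X α)

/-- `η ⊨ Γ`: `η` maps type variables to semantic types and respects the bounds in `Γ`. -/
def EnvModels (η : ℕ → PreType) (Γ : SCtx) : Prop :=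
  (∀ X, IsSemType (η X)) ∧ ∀ X A, Bind.tv X A ∈ Γ → η X ⊆ interp A η

/-- The semantic type environment `⟦Γ⟧η`. -/
def interpCtx (Γ : SCtx) (η : ℕ → PreType) : SemEnv :=
  fun x =>
    Γ.findSome? fun b =>
      match b with
      | Bind.v y A => if y = x then some (interp A η) else none
      | _ => none


/-! The membership of `(k, Ψ, fold v)` in `μF` is defined through `F` applied to the
approximant `⌊μF⌋_k`, which makes the definition well-founded. Non-expansiveness of `F`
lets us replace that approximant by `μF` itself below level `k`, which yields the
unfolding equation `(k, Ψ, fold v) ∈ μF ↔ ∀ j < k, (j, ⌊Ψ⌋_j, v) ∈ F(μF)`. Since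
`unfold (fold v) → v` is a single step, it consumes exactly the one index that the
equation loses, and `fold` costs none; (SemSubRec) follows from the same unfolding
by induction on the step index. -/

lemma papprox_papprox (τ : PreType) {i j : ℕ} (h : i ≤ j) :
    papprox (papprox τ j) i = papprox τ i := by
  ext t
  exact ⟨fun ⟨⟨ht, _⟩, hi⟩ => ⟨ht, hi⟩,
    fun ⟨ht, hi⟩ => ⟨⟨ht, hi.trans_le h⟩, hi⟩⟩

lemma IsSemType.papprox {τ : PreType} (hτ : IsSemType τ) (k : ℕ) :
    IsSemType (papprox τ k) :=
  fun t ht j Ψ' hext => ⟨hτ t ht.1 j Ψ' hext, hext.1.trans_lt ht.2⟩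

lemma NonExpansive.mem_iff {F : PreType → PreType} (hF : NonExpansive F) {τ : PreType}
    (hτ : IsSemType τ) {k : ℕ} {t : Triple} (ht : t.1 < k) :
    t ∈ F (papprox τ k) ↔ t ∈ F τ := by
  have h : t ∈ papprox (F τ) k ↔ t ∈ papprox (F (papprox τ k)) k := by rw [hF τ hτ k]
  exact ⟨fun h' => (h.2 ⟨h', ht⟩).1, fun h' => (h.1 ⟨h', ht⟩).1⟩

lemma Approx.seg_toApprox (τ : PreType) (k : ℕ) :
    Approx.seg (toApprox τ k) = papprox τ k := by
  ext t
  simp only [Approx.seg, toApprox, Approx.out, Approx.mk', cast_cast, cast_eq,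
    Set.mem_ofPred_eq, papprox]
  exact ⟨fun ⟨hlt, hm⟩ => ⟨hm, hlt⟩, fun ⟨hm, hlt⟩ => ⟨hlt, hm⟩⟩

lemma toApprox_papprox (τ : PreType) {i j : ℕ} (h : i ≤ j) :
    toApprox (papprox τ j) i = toApprox τ i := by
  unfold toApprox
  congr 1
  ext p
  exact ⟨fun hp => hp.1, fun hp => ⟨hp, p.1.isLt.trans_le h⟩⟩

namespace HPT

variable {k : ℕ} (Ψ : HPT k)

lemma trunc_apply (j : ℕ) (l : Loc) :
    (Ψ.trunc j).1 l = (Ψ.1 l).map fun S => toApprox (Approx.seg S) j := rfl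

lemma dom_trunc (j : ℕ) : (Ψ.trunc j).dom = Ψ.dom := by
  ext l
  simp only [dom, Set.mem_ofPred_eq, trunc_apply]
  cases Ψ.1 l <;> simp

lemma lookA_of_le {i j : ℕ} (h : i ≤ j) (l : Loc) :
    Ψ.lookA i l = (Ψ.lookA j l).map (papprox · i) := by
  simp only [lookA]
  cases Ψ.look l <;> simp [papprox_papprox _ h]

lemma lookA_trunc {i j : ℕ} (h : i ≤ j) (l : Loc) :
    (Ψ.trunc j).lookA i l = Ψ.lookA i l := by
  simp only [lookA, look, trunc_apply]
  cases Ψ.1 l <;> simp [Approx.seg_toApprox, papprox_papprox _ h]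

lemma trunc_trunc {i j : ℕ} (h : i ≤ j) : (Ψ.trunc j).trunc i = Ψ.trunc i := by
  apply Subtype.ext
  funext l
  simp only [trunc_apply]
  cases Ψ.1 l <;> simp [Approx.seg_toApprox, toApprox_papprox _ h]

variable {Ψ}

lemma trunc_eq_some {j : ℕ} {l : Loc} {S' : Approx j} (h : (Ψ.trunc j).1 l = some S') :
    ∃ S, Ψ.1 l = some S ∧ Approx.seg S' = papprox (Approx.seg S) j := by
  rw [trunc_apply, Option.map_eq_some_iff] at h
  obtain ⟨S, hS, rfl⟩ := h
  exact ⟨S, hS, Approx.seg_toApprox _ _⟩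

lemma IsTy.trunc (hΨ : Ψ.IsTy) (j : ℕ) : (Ψ.trunc j).IsTy := by
  intro l S' hS'
  obtain ⟨S, hS, hseg⟩ := trunc_eq_some hS'
  rw [hseg]
  exact (hΨ l S hS).papprox j

end HPT

namespace StExt

lemma trans {s t u : St} (h₁ : StExt s t) (h₂ : StExt t u) : StExt s u := by
  refine ⟨h₂.1.trans h₁.1, h₁.2.1.trans h₂.2.1, fun l hl => ?_⟩
  rw [h₂.2.2 l (h₁.2.1 hl), t.Ψ.lookA_of_le h₂.1, h₁.2.2 l hl, ← s.Ψ.lookA_of_le h₂.1]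

lemma of_trunc {k : ℕ} (Ψ : HPT k) {j : ℕ} (h : j ≤ k) :
    StExt ⟨k, Ψ⟩ ⟨j, Ψ.trunc j⟩ :=
  ⟨h, (Ψ.dom_trunc j).ge, fun l _ => Ψ.lookA_trunc le_rfl l⟩

lemma trunc {k j i : ℕ} {Ψ : HPT k} {Ψ' : HPT j} (hext : StExt ⟨k, Ψ⟩ ⟨j, Ψ'⟩)
    (hij : i ≤ j) : StExt ⟨i, Ψ.trunc i⟩ ⟨i, Ψ'.trunc i⟩ := by
  refine ⟨le_rfl, by simpa only [HPT.dom_trunc] using hext.2.1, fun l hl => ?_⟩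
  rw [HPT.dom_trunc] at hl
  rw [HPT.lookA_trunc _ le_rfl, HPT.lookA_trunc _ le_rfl, Ψ'.lookA_of_le hij,
    hext.2.2 l hl, ← Ψ.lookA_of_le hij]

end StExt

lemma HeapOk.trunc {h : Heap} {k : ℕ} {Ψ : HPT k} (hok : HeapOk h Ψ) {j : ℕ} (hj : j ≤ k) :
    HeapOk h (Ψ.trunc j) := by
  refine ⟨by simpa only [HPT.dom_trunc] using hok.1, fun i hi l S' hS' v hv => ?_⟩
  obtain ⟨S, hS, hseg⟩ := HPT.trunc_eq_some hS'
  rw [hseg, Ψ.trunc_trunc hi.le]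
  exact ⟨hok.2 i (hi.trans_le hj) l S hS v hv, hi⟩

section RecursiveType

variable {F : PreType → PreType}

lemma mem_muTy_iff_papprox {k : ℕ} {Ψ : HPT k} {w : CVal} :
    (⟨k, Ψ, w⟩ : Triple) ∈ muTy F ↔ ∃ v : CVal, w.1 = Tm.fold v.1 ∧
      ∀ j < k, (⟨j, Ψ.trunc j, v⟩ : Triple) ∈ F (papprox (muTy F) k) := by
  have happrox : {t : Triple | ∃ _ : t.1 < k, muMem F t.1 t.2.1 t.2.2} =
      papprox (muTy F) k := by
    ext t
    exact ⟨fun ⟨hlt, hm⟩ => ⟨hm, hlt⟩, fun ⟨hm, hlt⟩ => ⟨hlt, hm⟩⟩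
  change muMem F k Ψ w ↔ _
  rw [muMem, happrox]

variable (hF : SemPreserving F) (hFne : NonExpansive F)
include hF hFne

lemma isSemType_papprox_muTy (k : ℕ) : IsSemType (papprox (muTy F) k) := by
  induction k using Nat.strong_induction_on with
  | _ k ih =>
    rintro ⟨m, Ψ, w⟩ ⟨hmem, hmk⟩ j Ψ' hext
    have hjm : j ≤ m := hext.1
    refine ⟨?_, hjm.trans_lt hmk⟩
    obtain ⟨v, hw, hv⟩ := mem_muTy_iff_papprox.1 hmem
    refine mem_muTy_iff_papprox.2 ⟨v, hw, fun i hij => ?_⟩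
    have hmem_j : (⟨i, Ψ.trunc i, v⟩ : Triple) ∈ F (papprox (muTy F) j) := by
      have h := (hFne.mem_iff (ih m hmk) (t := ⟨i, Ψ.trunc i, v⟩) hij).2
        (hv i (hij.trans_le hjm))
      rwa [papprox_papprox _ hjm] at h
    exact hF _ (ih j (hjm.trans_lt hmk)) _ hmem_j i _ (hext.trunc hij.le)

lemma isSemType_muTy : IsSemType (muTy F) :=
  fun t ht j Ψ' hext =>
    (isSemType_papprox_muTy hF hFne (t.1 + 1) t ⟨ht, t.1.lt_succ_self⟩ j Ψ' hext).1

lemma mem_muTy_iff {k : ℕ} {Ψ : HPT k} {w : CVal} :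
    (⟨k, Ψ, w⟩ : Triple) ∈ muTy F ↔ ∃ v : CVal, w.1 = Tm.fold v.1 ∧
      ∀ j < k, (⟨j, Ψ.trunc j, v⟩ : Triple) ∈ F (muTy F) := by
  rw [mem_muTy_iff_papprox]
  refine exists_congr fun v => and_congr_right fun _ => forall₂_congr fun j hj => ?_
  exact hFne.mem_iff (isSemType_muTy hF hFne) hj

lemma fold_mem_muTy {k : ℕ} {Ψ : HPT k} {v : CVal} (hv : (⟨k, Ψ, v⟩ : Triple) ∈ F (muTy F))
    (hfold : IsVal (Tm.fold v.1) ∧ fv (Tm.fold v.1) = ∅) :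
    (⟨k, Ψ, ⟨Tm.fold v.1, hfold⟩⟩ : Triple) ∈ muTy F :=
  (mem_muTy_iff hF hFne).2 ⟨v, rfl, fun j hj =>
    hF _ (isSemType_muTy hF hFne) _ hv j _ (StExt.of_trunc Ψ hj.le)⟩

end RecursiveType

lemma muTy_subset_muTy {F G : PreType → PreType}
    (hF : SemPreserving F) (hFne : NonExpansive F)
    (hG : SemPreserving G) (hGne : NonExpansive G)
    (hsub : ∀ α β : PreType, IsSemType α → IsSemType β → α ⊆ β → F α ⊆ G β) :
    muTy F ⊆ muTy G := by
  suffices h : ∀ k, papprox (muTy F) k ⊆ papprox (muTy G) k from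
    fun t ht => (h (t.1 + 1) ⟨ht, t.1.lt_succ_self⟩).1
  intro k
  induction k using Nat.strong_induction_on with
  | _ k ih =>
    rintro ⟨m, Ψ, w⟩ ⟨hmem, hmk⟩
    obtain ⟨v, hw, hv⟩ := mem_muTy_iff_papprox.1 hmem
    refine ⟨mem_muTy_iff_papprox.2 ⟨v, hw, fun j hj => ?_⟩, hmk⟩
    exact hsub _ _ (isSemType_papprox_muTy hF hFne m) (isSemType_papprox_muTy hG hGne m)
      (ih m hmk) (hv j hj)

lemma isVal_of_isVal_plug {E : ECtx} {a : Tm} (h : IsVal (E.plug a)) : IsVal a := by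
  induction E with
  | hole => exact h
  | fold E ih => cases h with | fold h => exact ih h
  | pack E ih => cases h with | pack h => exact ih h
  | _ => cases h

lemma IsVal.irred {v : Tm} (hv : IsVal v) (h : Heap) : Irred (h, v) := by
  rintro ⟨c', ⟨E, hd⟩⟩
  have := isVal_of_isVal_plug hv
  cases hd <;> cases this

namespace Step

lemma exists_head {h h' : Heap} {a a' : Tm} (hs : Step (h, a) (h', a')) :
    ∃ (E : ECtx) (r r' : Tm), a = E.plug r ∧ a' = E.plug r' ∧ Head (h, r) (h', r') := by
  cases hs with
  | ctx E hd => exact ⟨E, _, _, rfl, rfl, hd⟩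

variable {h h' : Heap} {a a' : Tm}

lemma fold (hs : Step (h, a) (h', a')) : Step (h, .fold a) (h', .fold a') := by
  obtain ⟨E, r, r', rfl, rfl, hd⟩ := hs.exists_head
  exact Step.ctx (.fold E) hd

lemma unfd (hs : Step (h, a) (h', a')) : Step (h, .unfd a) (h', .unfd a') := by
  obtain ⟨E, r, r', rfl, rfl, hd⟩ := hs.exists_head
  exact Step.ctx (.unfd E) hd

lemma of_fold {c : Config} (hs : Step (h, .fold a) c) :
    ∃ a', c.2 = .fold a' ∧ Step (h, a) (c.1, a') := by
  obtain ⟨h₁, b⟩ := c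
  obtain ⟨E, r, r', hE, rfl, hd⟩ := hs.exists_head
  cases E with
  | hole => cases hE; cases hd
  | fold E => cases hE; exact ⟨_, rfl, Step.ctx E hd⟩
  | _ => cases hE

lemma of_unfd {c : Config} (hs : Step (h, .unfd a) c) :
    (∃ a', c.2 = .unfd a' ∧ Step (h, a) (c.1, a')) ∨
      ∃ v, a = .fold v ∧ IsVal v ∧ c = (h, v) := by
  obtain ⟨h₁, b⟩ := c
  obtain ⟨E, r, r', hE, rfl, hd⟩ := hs.exists_head
  cases E with
  | hole => cases hE; cases hd with | unfold hv => exact .inr ⟨_, rfl, hv, rfl⟩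
  | unfd E => cases hE; exact .inl ⟨_, rfl, Step.ctx E hd⟩
  | _ => cases hE

end Step

lemma Irred.of_fold {h : Heap} {a : Tm} (hi : Irred (h, .fold a)) : Irred (h, a) :=
  fun ⟨_, hs⟩ => hi ⟨_, hs.fold⟩

lemma Irred.of_unfd {h : Heap} {a : Tm} (hi : Irred (h, .unfd a)) : Irred (h, a) :=
  fun ⟨_, hs⟩ => hi ⟨_, hs.unfd⟩

lemma StepN.of_fold {n : ℕ} {h : Heap} {a : Tm} {c : Config}
    (hs : StepN n (h, .fold a) c) : ∃ a', c.2 = .fold a' ∧ StepN n (h, a) (c.1, a') := by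
  generalize hc₀ : (h, Tm.fold a) = c₀ at hs
  induction hs with
  | refl => subst hc₀; exact ⟨a, rfl, .refl _⟩
  | @tail _ _ c' _ _ hstep ih =>
    obtain ⟨h₁, b₁⟩ := c'
    obtain ⟨a₁, rfl, hs₁⟩ := ih hc₀
    obtain ⟨a₂, hc, hstep'⟩ := hstep.of_fold
    exact ⟨a₂, hc, hs₁.tail hstep'⟩

lemma StepN.of_unfd {n : ℕ} {h : Heap} {a : Tm} {c : Config}
    (hs : StepN n (h, .unfd a) c) :
    (∃ a', c.2 = .unfd a' ∧ StepN n (h, a) (c.1, a')) ∨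
      ∃ m v, n = m + 1 ∧ StepN m (h, a) (c.1, .fold v) ∧ IsVal v ∧ c.2 = v := by
  generalize hc₀ : (h, Tm.unfd a) = c₀ at hs
  induction hs with
  | refl => subst hc₀; exact .inl ⟨a, rfl, .refl _⟩
  | @tail _ _ c' _ _ hstep ih =>
    obtain ⟨h₁, b₁⟩ := c'
    rcases ih hc₀ with ⟨a₁, rfl, hs₁⟩ | ⟨m, v, rfl, -, hv, rfl⟩
    · rcases hstep.of_unfd with ⟨a₂, hc, hstep'⟩ | ⟨v, rfl, hv, rfl⟩
      · exact .inl ⟨a₂, hc, hs₁.tail hstep'⟩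
      · exact .inr ⟨_, v, rfl, hs₁, hv, rfl⟩
    · exact absurd ⟨_, hstep⟩ (hv.irred _)

section Typing

variable {F : PreType → PreType} (hF : SemPreserving F) (hFne : NonExpansive F)
include hF hFne

lemma HasTypeAt.fold {a : Tm} {k : ℕ} {Ψ : HPT k} (ha : HasTypeAt a Ψ (F (muTy F))) :
    HasTypeAt (.fold a) Ψ (muTy F) := by
  intro j hj h h' b hok hs hirr
  obtain ⟨a', rfl, hs'⟩ := hs.of_fold
  obtain ⟨Ψ', hΨ', hext, hok', hval, hmem⟩ := ha j hj h h' a' hok hs' hirr.of_fold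
  exact ⟨Ψ', hΨ', hext, hok', ⟨.fold hval.1, hval.2⟩, fold_mem_muTy hF hFne hmem _⟩

lemma HasTypeAt.unfd {a : Tm} {k : ℕ} {Ψ : HPT k} (ha : HasTypeAt a Ψ (muTy F)) :
    HasTypeAt (.unfd a) Ψ (F (muTy F)) := by
  intro j hj h h' b hok hs hirr
  rcases hs.of_unfd with ⟨a', rfl, hs'⟩ | ⟨i, b, rfl, hs', hb, rfl⟩
  · -- `a` is stuck at `a'`; but `a'` has type `μF`, so it is a `fold` and `unfold a'` steps
    obtain ⟨_, _, _, _, _, hmem⟩ := ha j hj h h' a' hok hs' hirr.of_unfd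
    obtain ⟨w, hw, -⟩ := (mem_muTy_iff hF hFne).1 hmem
    subst hw
    exact (hirr ⟨_, Step.ctx .hole (.unfold w.2.1)⟩).elim
  · obtain ⟨Ψ', hΨ', hext, hok', _, hmem⟩ :=
      ha i (by omega) h h' (.fold b) hok hs' ((IsVal.fold hb).irred _)
    obtain ⟨w, hw, hw'⟩ := (mem_muTy_iff hF hFne).1 hmem
    obtain rfl : b = w.1 := Tm.fold.inj hw
    have hlt : k - (i + 1) < k - i := by omega
    exact ⟨Ψ'.trunc _, hΨ'.trunc _, hext.trans (StExt.of_trunc Ψ' hlt.le), hok'.trunc hlt.le,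
      w.2, hw' _ hlt⟩

lemma SemJudg.fold {Γ : SemEnv} {a : Tm} (ha : SemJudg Γ a (F (muTy F))) :
    SemJudg Γ (.fold a) (muTy F) :=
  ⟨ha.1, fun k Ψ hΨ σ hσ => (ha.2 k Ψ hΨ σ hσ).fold hF hFne⟩

lemma SemJudg.unfd {Γ : SemEnv} {a : Tm} (ha : SemJudg Γ a (muTy F)) :
    SemJudg Γ (.unfd a) (F (muTy F)) :=
  ⟨ha.1, fun k Ψ hΨ σ hσ => (ha.2 k Ψ hΨ σ hσ).unfd hF hFne⟩

end Typing

/-- **Recursive types.** The typing lemmas (SemUnfold), (SemFold) and (SemSubRec)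
hold for all non-expansive `F, G`. -/
theorem recursive_types (F G : PreType → PreType)
    (hF : SemPreserving F) (hFne : NonExpansive F)
    (hG : SemPreserving G) (hGne : NonExpansive G) :
    (∀ Γ : SemEnv, EnvSem Γ → ∀ a : Tm,
      SemJudg Γ a (muTy F) → SemJudg Γ (Tm.unfd a) (F (muTy F))) ∧
    (∀ Γ : SemEnv, EnvSem Γ → ∀ a : Tm,
      SemJudg Γ a (F (muTy F)) → SemJudg Γ (Tm.fold a) (muTy F)) ∧
    ((∀ α β : PreType, IsSemType α → IsSemType β → α ⊆ β → F α ⊆ G β) →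
      muTy F ⊆ muTy G) :=
  ⟨fun _ _ _ ha => ha.unfd hF hFne, fun _ _ _ ha => ha.fold hF hFne,
    muTy_subset_muTy hF hFne hG hGne⟩

end ImpObj
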